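/- Let n ≥ 4 and let G be a triangle-free connected graph with χ(G) ≥ 3, and G* = (G ⊠ K_{n-1}) ∨ K_{(n-3)(n-1)}. If φ is a K_n-WORM coloring of G* that uses exactly n-3 colors on the universal set V* and makes every fiber V_i monochromatic, then assigning to each vertex v_i of G the color φ(V_i) gives a proper vertex coloring of G, and the colors φ(V_i) are disjoint from those used on V*; consequently φ uses exactly χ'(proper coloring) + n - 3 colors in total, where the number of colors on the fibers can be any value between χ(G) and |V(G)|. -/

import Mathlib

open SimpleGraph

/-- A vertex coloring `c` is a `K_n`-WORM coloring of `G` if no set of `n`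
pairwise adjacent vertices is monochromatic and none is rainbow. -/
def IsKnWORM {β : Type*} (G : SimpleGraph β) (n : ℕ) (c : β → ℕ) : Prop :=
  ∀ s : Finset β, G.IsNClique n s →
    (∃ u ∈ s, ∃ v ∈ s, c u ≠ c v) ∧ (∃ u ∈ s, ∃ v ∈ s, u ≠ v ∧ c u = c v)

/-- The strong product `G ⊠ H`. -/
def strongProd {α β : Type*} (G : SimpleGraph α) (H : SimpleGraph β) :
    SimpleGraph (α × β) where
  Adj x y := x ≠ y ∧ (x.1 = y.1 ∨ G.Adj x.1 y.1) ∧ (x.2 = y.2 ∨ H.Adj x.2 y.2)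
  symm := ⟨by
    rintro x y ⟨h1, h2, h3⟩
    exact ⟨h1.symm, h2.imp Eq.symm (fun h => G.symm.symm _ _ h), h3.imp Eq.symm (fun h => H.symm.symm _ _ h)⟩⟩
  loopless := ⟨fun x h => h.1 rfl⟩

/-- The join `G ∨ H`: disjoint union together with all edges between the parts. -/
def graphJoin {α β : Type*} (G : SimpleGraph α) (H : SimpleGraph β) :
    SimpleGraph (α ⊕ β) where
  Adj x y :=
    match x, y with
    | .inl a, .inl b => G.Adj a b
    | .inr a, .inr b => H.Adj a b
    | _, _ => True
  symm := ⟨by rintro (a | a) (b | b) h <;> simp_all [SimpleGraph.adj_comm]⟩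
  loopless := ⟨by rintro (a | a) h <;> simp_all⟩

/-- The graph `G* = (G ⊠ K_{n-1}) ∨ K_{(n-3)(n-1)}`. -/
def Gstar {V : Type*} (G : SimpleGraph V) (n : ℕ) :
    SimpleGraph ((V × Fin (n - 1)) ⊕ Fin ((n - 3) * (n - 1))) :=
  graphJoin (strongProd G (⊤ : SimpleGraph (Fin (n - 1)))) (⊤ : SimpleGraph (Fin ((n - 3) * (n - 1))))

/-
Each fiber is a clique of size `n - 1` joined to all of `V*` and, along an edge `uv` of `G`, to
the whole fiber of `v`. Adding one such vertex to a monochromatic fiber gives an `n`-clique, which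
a WORM coloring may not make monochromatic: adjacent fibers, and a fiber and `V*`, get different
colors.

Conversely, take a proper coloring `c` of `G` with exactly `t` colors (from a `χ(G)`-coloring,
repeatedly give a vertex of a repeated color a fresh color), color the fiber of `i` by
`n - 3 + c i`, and split `V*` into `n - 3` blocks of `n - 1` vertices colored `0, …, n - 4`.
As `G` is triangle-free, an `n`-clique meets at most two fibers and so sees at most `n - 1`
colors; and two adjacent vertices of the same color differ in their position inside their fiber
or block, of which there are only `n - 1`, so no `n`-clique is monochromatic.
-/

open Finset

section Gstar

variable {V : Type*} {G : SimpleGraph V} {n : ℕ}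

@[simp] lemma gstar_adj_inl_inl {p q : V × Fin (n - 1)} :
    (Gstar G n).Adj (.inl p) (.inl q) ↔ p ≠ q ∧ (p.1 = q.1 ∨ G.Adj p.1 q.1) := by
  simp [Gstar, graphJoin, strongProd, em]

@[simp] lemma gstar_adj_inr_inl (w : Fin ((n - 3) * (n - 1))) (p : V × Fin (n - 1)) :
    (Gstar G n).Adj (.inr w) (.inl p) := trivial

@[simp] lemma gstar_adj_inr_inr {w x : Fin ((n - 3) * (n - 1))} :
    (Gstar G n).Adj (.inr w) (.inr x) ↔ w ≠ x := Iff.rfl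

variable (n) in
def gstarFiber (i : V) : Finset ((V × Fin (n - 1)) ⊕ Fin ((n - 3) * (n - 1))) :=
  univ.map ⟨fun a => .inl (i, a), fun a b h => by simpa using h⟩

lemma mem_gstarFiber {i : V} {x : (V × Fin (n - 1)) ⊕ Fin ((n - 3) * (n - 1))} :
    x ∈ gstarFiber n i ↔ ∃ a, .inl (i, a) = x := by
  simp only [gstarFiber, mem_map, mem_univ, true_and]
  rfl

lemma card_gstarFiber (i : V) : #(gstarFiber n i) = n - 1 := by
  simp [gstarFiber]

lemma isNClique_insert_gstarFiber [DecidableEq V] (hn : 1 ≤ n) {i : V}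
    {x : (V × Fin (n - 1)) ⊕ Fin ((n - 3) * (n - 1))}
    (hx : ∀ a, (Gstar G n).Adj x (.inl (i, a))) :
    (Gstar G n).IsNClique n (insert x (gstarFiber n i)) := by
  have hxF : x ∉ gstarFiber n i := by
    rintro hx'
    obtain ⟨a, rfl⟩ := mem_gstarFiber.mp hx'
    exact (Gstar G n).irrefl (hx a)
  refine ⟨?_, by rw [card_insert_of_notMem hxF, card_gstarFiber]; omega⟩
  rw [coe_insert]
  refine IsClique.insert ?_ fun y hy _ => ?_
  · rintro _ ha _ hb hab
    obtain ⟨a, rfl⟩ := mem_gstarFiber.mp ha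
    obtain ⟨b, rfl⟩ := mem_gstarFiber.mp hb
    simpa using hab
  · obtain ⟨a, rfl⟩ := mem_gstarFiber.mp hy
    exact hx a

end Gstar

lemma IsKnWORM.apply_ne_of_isNClique_insert {β : Type*} [DecidableEq β] {G : SimpleGraph β}
    {n : ℕ} {c : β → ℕ} (hc : IsKnWORM G n c) {s : Finset β} {x : β} {k : ℕ}
    (hs : G.IsNClique n (insert x s)) (hk : ∀ y ∈ s, c y = k) : c x ≠ k := by
  intro hx
  have hk' : ∀ y ∈ insert x s, c y = k := forall_mem_insert _ _ _ |>.mpr ⟨hx, hk⟩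
  obtain ⟨⟨u, hu, v, hv, huv⟩, -⟩ := hc _ hs
  exact huv ((hk' u hu).trans (hk' v hv).symm)

section FiberwiseConstant

variable {V : Type*} [DecidableEq V] {G : SimpleGraph V} {n : ℕ} (hn : 1 ≤ n)
  {φ : (V × Fin (n - 1)) ⊕ Fin ((n - 3) * (n - 1)) → ℕ} (hφ : IsKnWORM (Gstar G n) n φ)
  (hfib : ∀ (i : V) (a b : Fin (n - 1)), φ (.inl (i, a)) = φ (.inl (i, b)))
include hn hφ hfib

lemma IsKnWORM.gstar_fiber_ne_of_adj {u v : V} (huv : G.Adj u v) (a b : Fin (n - 1)) :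
    φ (.inl (u, a)) ≠ φ (.inl (v, b)) := by
  refine (hφ.apply_ne_of_isNClique_insert
    (isNClique_insert_gstarFiber (i := u) hn fun a' => ?_) ?_).symm
  · exact gstar_adj_inl_inl.mpr
      ⟨fun h => G.ne_of_adj huv (congrArg Prod.fst h).symm, .inr huv.symm⟩
  · rintro _ hy
    obtain ⟨a', rfl⟩ := mem_gstarFiber.mp hy
    exact hfib u a' a

lemma IsKnWORM.gstar_fiber_ne_universal (i : V) (a : Fin (n - 1))
    (w : Fin ((n - 3) * (n - 1))) : φ (.inl (i, a)) ≠ φ (.inr w) := by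
  refine (hφ.apply_ne_of_isNClique_insert
    (isNClique_insert_gstarFiber (i := i) hn fun a' => ?_) ?_).symm
  · exact gstar_adj_inr_inl w _
  · rintro _ hy
    obtain ⟨a', rfl⟩ := mem_gstarFiber.mp hy
    exact hfib i a' a

end FiberwiseConstant

lemma ncard_range_gstar_eq_add {V : Type*} [Finite V] {n : ℕ}
    {φ : (V × Fin (n - 1)) ⊕ Fin ((n - 3) * (n - 1)) → ℕ} (z : Fin (n - 1))
    (hfib : ∀ (i : V) (a b : Fin (n - 1)), φ (.inl (i, a)) = φ (.inl (i, b)))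
    (hdisj : ∀ i w, φ (.inl (i, z)) ≠ φ (.inr w)) :
    (Set.range φ).ncard =
      (Set.range fun i => φ (.inl (i, z))).ncard + (Set.range fun w => φ (.inr w)).ncard := by
  have hfibers : Set.range (φ ∘ .inl) = Set.range fun i => φ (.inl (i, z)) := by
    ext
    constructor
    · rintro ⟨⟨i, a⟩, rfl⟩
      exact ⟨i, hfib i z a⟩
    · rintro ⟨i, rfl⟩
      exact ⟨(i, z), rfl⟩
  have hdisj' : Disjoint (Set.range fun i => φ (.inl (i, z))) (Set.range (φ ∘ .inr)) := by
    rw [Set.disjoint_range_iff]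
    exact hdisj
  rw [Sum.range_eq, hfibers, Set.ncard_union_eq hdisj']
  rfl

section ExactColoring

variable {V : Type*} [Fintype V] {G : SimpleGraph V}

lemma exists_coloring_ncard_range_succ (C : G.Coloring ℕ)
    (hC : (Set.range C).ncard < Fintype.card V) :
    ∃ C' : G.Coloring ℕ, (Set.range C').ncard = (Set.range C).ncard + 1 := by
  classical
  have hcard : #(univ.image C) < #(univ : Finset V) := by
    rwa [card_univ, ← Set.ncard_coe_finset, coe_image, coe_univ, Set.image_univ]
  obtain ⟨u, -, v, -, huv, hCuv⟩ :=
    exists_ne_map_eq_of_card_lt_of_maps_to hcard fun x _ => mem_image_of_mem C (mem_univ x)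
  obtain ⟨N, hN⟩ := Infinite.exists_notMem_finset (univ.image C)
  have hN' : ∀ w, C w ≠ N := by simpa using hN
  let c' := Function.update C u N
  have hrange : Set.range c' = insert N (Set.range C) := by
    ext x
    simp only [Set.mem_range, Set.mem_insert_iff]
    constructor
    · rintro ⟨w, rfl⟩
      by_cases hw : w = u
      · simp [c', hw]
      · exact .inr ⟨w, by simp [c', hw]⟩
    · rintro (rfl | ⟨w, rfl⟩)
      · exact ⟨u, by simp [c']⟩
      · by_cases hw : w = u
        · exact ⟨v, by simp [c', Ne.symm huv, hw, hCuv]⟩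
        · exact ⟨w, by simp [c', hw]⟩
  refine ⟨Coloring.mk c' fun {x y} hxy => ?_, ?_⟩
  · by_cases hx : x = u <;> by_cases hy : y = u
    · exact absurd (hx.trans hy.symm) hxy.ne
    · simpa [c', hx, hy] using (hN' y).symm
    · simpa [c', hx, hy] using hN' x
    · simpa [c', hx, hy] using C.valid hxy
  · change (Set.range c').ncard = _
    rw [hrange, Set.ncard_insert_of_notMem (by simpa using hN')]

lemma exists_coloring_ncard_range_eq {t : ℕ} (hG : G.Colorable t) (ht : t ≤ Fintype.card V) :
    ∃ C : G.Coloring ℕ, (Set.range C).ncard = t := by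
  obtain ⟨C₀⟩ := hG
  let C := G.recolorOfEmbedding Fin.valEmbedding C₀
  have hC : (Set.range C).ncard ≤ t := by
    calc (Set.range C).ncard ≤ (range t : Set ℕ).ncard := by
          refine Set.ncard_le_ncard ?_ (finite_toSet _)
          rintro _ ⟨w, rfl⟩
          simp [C]
      _ = t := by rw [Set.ncard_coe_finset, card_range]
  suffices ∀ m, (Set.range C).ncard ≤ m → m ≤ Fintype.card V →
      ∃ C : G.Coloring ℕ, (Set.range C).ncard = m from this t hC ht
  intro m hm
  induction m, hm using Nat.le_induction with
  | base => exact fun _ => ⟨C, rfl⟩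
  | succ m _ ih =>
    intro hm
    obtain ⟨C', hC'⟩ := ih (by omega)
    obtain ⟨C'', hC''⟩ := exists_coloring_ncard_range_succ C' (by omega)
    exact ⟨C'', by rw [hC'', hC']⟩

end ExactColoring

lemma SimpleGraph.IsClique.card_lt_of_cliqueFree {α : Type*} {G : SimpleGraph α} {k : ℕ}
    {s : Finset α} (hs : G.IsClique (s : Set α)) (hG : G.CliqueFree k) : #s < k := by
  by_contra! h
  obtain ⟨t, hts, ht⟩ := exists_subset_card_eq h
  exact hG t ⟨hs.subset (by simpa using hts), ht⟩

section StarColoring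

variable {V : Type*} {G : SimpleGraph V} {n : ℕ} {c : V → ℕ}

variable (n) in
def starColoring (c : V → ℕ) : (V × Fin (n - 1)) ⊕ Fin ((n - 3) * (n - 1)) → ℕ :=
  Sum.elim (fun p => n - 3 + c p.1) (fun w => w / (n - 1))

-- The position of a vertex inside its fiber, or inside its block of `V*`.
variable (n) in
def gstarSlot : (V × Fin (n - 1)) ⊕ Fin ((n - 3) * (n - 1)) → ℕ :=
  Sum.elim (fun p => p.2) (fun w => w % (n - 1))

lemma starColoring_inr_lt (w : Fin ((n - 3) * (n - 1))) :
    starColoring n c (.inr w) < n - 3 :=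
  Nat.div_lt_of_lt_mul (mul_comm (n - 3) (n - 1) ▸ w.2)

lemma gstarSlot_lt (hn : 2 ≤ n) (x : (V × Fin (n - 1)) ⊕ Fin ((n - 3) * (n - 1))) :
    gstarSlot n x < n - 1 := by
  rcases x with p | w
  · exact p.2.2
  · exact Nat.mod_lt _ (by omega)

lemma gstarSlot_ne_of_adj (hc : ∀ u v, G.Adj u v → c u ≠ c v)
    {x y : (V × Fin (n - 1)) ⊕ Fin ((n - 3) * (n - 1))} (hxy : (Gstar G n).Adj x y)
    (hcol : starColoring n c x = starColoring n c y) : gstarSlot n x ≠ gstarSlot n y := by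
  intro hslot
  rcases x with ⟨i, a⟩ | w <;> rcases y with ⟨j, b⟩ | w'
  · simp only [starColoring, gstarSlot, Sum.elim_inl, Nat.add_left_cancel_iff] at hcol hslot
    obtain ⟨hne, rfl | hij⟩ := gstar_adj_inl_inl.mp hxy
    · exact hne (by rw [Fin.ext hslot])
    · exact hc i j hij hcol
  · have := starColoring_inr_lt (c := c) w'
    simp only [starColoring, Sum.elim_inl, Sum.elim_inr] at hcol this
    omega
  · have := starColoring_inr_lt (c := c) w
    simp only [starColoring, Sum.elim_inl, Sum.elim_inr] at hcol this
    omega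
  · simp only [starColoring, gstarSlot, Sum.elim_inr] at hcol hslot
    have hw := Nat.div_add_mod w (n - 1)
    have hw' := Nat.div_add_mod w' (n - 1)
    exact gstar_adj_inr_inr.mp hxy (Fin.ext (by rw [← hw, ← hw', hcol, hslot]))

lemma starColoring_exists_ne_of_isNClique (hn : 2 ≤ n) (hc : ∀ u v, G.Adj u v → c u ≠ c v)
    {s : Finset ((V × Fin (n - 1)) ⊕ Fin ((n - 3) * (n - 1)))} (hs : (Gstar G n).IsNClique n s) :
    ∃ u ∈ s, ∃ v ∈ s, starColoring n c u ≠ starColoring n c v := by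
  by_contra! hmono
  have hslot : #s ≤ #(range (n - 1)) :=
    card_le_card_of_injOn (gstarSlot n) (fun x _ => mem_range.mpr (gstarSlot_lt hn x))
      fun x hx y hy h => by_contra fun hne =>
        gstarSlot_ne_of_adj hc (hs.isClique hx hy hne) (hmono x hx y hy) h
  rw [hs.card_eq, card_range] at hslot
  omega

lemma isClique_image_fst_toLeft [DecidableEq V]
    {s : Finset ((V × Fin (n - 1)) ⊕ Fin ((n - 3) * (n - 1)))} (hs : (Gstar G n).IsClique s) :
    G.IsClique (s.toLeft.image Prod.fst : Set V) := by
  rintro _ hi _ hj hij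
  simp only [coe_image, Set.mem_image, mem_coe, mem_toLeft] at hi hj
  obtain ⟨p, hp, rfl⟩ := hi
  obtain ⟨q, hq, rfl⟩ := hj
  have hpq : (Sum.inl p : (V × Fin (n - 1)) ⊕ Fin ((n - 3) * (n - 1))) ≠ .inl q :=
    fun h => hij (by cases h; rfl)
  exact (gstar_adj_inl_inl.mp (hs hp hq hpq)).2.resolve_left hij

lemma starColoring_exists_eq_of_isNClique (hn : 3 ≤ n) (htf : G.CliqueFree 3)
    {s : Finset ((V × Fin (n - 1)) ⊕ Fin ((n - 3) * (n - 1)))} (hs : (Gstar G n).IsNClique n s) :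
    ∃ u ∈ s, ∃ v ∈ s, u ≠ v ∧ starColoring n c u = starColoring n c v := by
  classical
  set F := s.toLeft.image Prod.fst
  have hF : #F < 3 := (isClique_image_fst_toLeft hs.isClique).card_lt_of_cliqueFree htf
  refine exists_ne_map_eq_of_card_lt_of_maps_to
    (t := range (n - 3) ∪ F.image (n - 3 + c ·)) ?_ ?_
  · calc #(range (n - 3) ∪ F.image (n - 3 + c ·)) ≤ n - 3 + #F :=
          (card_union_le _ _).trans (by rw [card_range]; gcongr; exact card_image_le)
      _ < #s := by rw [hs.card_eq]; omega
  · rintro (p | w) hx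
    · exact mem_union_right _ (mem_image_of_mem _ (mem_image_of_mem _ (mem_toLeft.mpr hx)))
    · exact mem_union_left _ (mem_range.mpr (starColoring_inr_lt w))

lemma isKnWORM_starColoring (hn : 3 ≤ n) (htf : G.CliqueFree 3) (C : G.Coloring ℕ) :
    IsKnWORM (Gstar G n) n (starColoring n C) := fun _ hs =>
  ⟨starColoring_exists_ne_of_isNClique (by omega) (fun _ _ => C.valid) hs,
    starColoring_exists_eq_of_isNClique hn htf hs⟩

lemma ncard_range_starColoring_inr :
    (Set.range fun w : Fin ((n - 3) * (n - 1)) => starColoring n c (.inr w)).ncard = n - 3 := by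
  suffices (Set.range fun w : Fin ((n - 3) * (n - 1)) => starColoring n c (.inr w)) =
      ↑(range (n - 3)) by
    rw [this, Set.ncard_coe_finset, card_range]
  ext x
  simp only [Set.mem_range, coe_range, Set.mem_Iio]
  constructor
  · rintro ⟨w, rfl⟩
    exact starColoring_inr_lt w
  · intro hx
    have hn : 0 < n - 1 := by omega
    exact ⟨⟨x * (n - 1), Nat.mul_lt_mul_of_pos_right hx hn⟩, Nat.mul_div_cancel x hn⟩

lemma ncard_range_starColoring_inl (z : Fin (n - 1)) :
    (Set.range fun i => starColoring n c (.inl (i, z))).ncard = (Set.range c).ncard := by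
  rw [← Set.ncard_image_of_injective (Set.range c) (add_right_injective (n - 3)),
    ← Set.range_comp]
  rfl

end StarColoring

/-- Let `n ≥ 4`, `G` triangle-free connected with `χ(G) ≥ 3`, and
`G* = (G ⊠ K_{n-1}) ∨ K_{(n-3)(n-1)}`.  If `φ` is a `K_n`-WORM coloring of `G*`
using exactly `n-3` colors on the universal set `V*` and making every fiber
`V_i` monochromatic, then `v_i ↦ φ(V_i)` is a proper coloring of `G`, the fiber
colors avoid the colors of `V*`, and the total number of colors is the number
of fiber colors plus `n-3`; moreover the number of fiber colors can be any
value between `χ(G)` and `|V(G)|`. -/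
theorem stmt18 {V : Type} [Fintype V] (n : ℕ) (hn : 4 ≤ n)
    (G : SimpleGraph V) (htf : G.CliqueFree 3) :
    (∀ φ : (V × Fin (n - 1)) ⊕ Fin ((n - 3) * (n - 1)) → ℕ,
      IsKnWORM (Gstar G n) n φ →
      (Set.range (fun w : Fin ((n - 3) * (n - 1)) => φ (Sum.inr w))).ncard = n - 3 →
      (∀ (i : V) (a b : Fin (n - 1)), φ (Sum.inl (i, a)) = φ (Sum.inl (i, b))) →
      (∀ u v : V, G.Adj u v →
          φ (Sum.inl (u, ⟨0, by omega⟩)) ≠ φ (Sum.inl (v, ⟨0, by omega⟩))) ∧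
      (∀ i : V, φ (Sum.inl (i, ⟨0, by omega⟩)) ∉
          Set.range (fun w : Fin ((n - 3) * (n - 1)) => φ (Sum.inr w))) ∧
      (Set.range φ).ncard =
        (Set.range (fun i : V => φ (Sum.inl (i, ⟨0, by omega⟩)))).ncard + (n - 3)) ∧
    (∀ t : ℕ, G.chromaticNumber ≤ (t : ℕ∞) → t ≤ Fintype.card V →
      ∃ φ : (V × Fin (n - 1)) ⊕ Fin ((n - 3) * (n - 1)) → ℕ,
        IsKnWORM (Gstar G n) n φ ∧
        (Set.range (fun w : Fin ((n - 3) * (n - 1)) => φ (Sum.inr w))).ncard = n - 3 ∧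
        (∀ (i : V) (a b : Fin (n - 1)), φ (Sum.inl (i, a)) = φ (Sum.inl (i, b))) ∧
        (Set.range (fun i : V => φ (Sum.inl (i, ⟨0, by omega⟩)))).ncard = t) := by
  classical
  refine ⟨fun φ hφ hstar hfib => ?_, fun t hχt ht => ?_⟩
  · have hdisj : ∀ i w, φ (.inl (i, ⟨0, by omega⟩)) ≠ φ (.inr w) :=
      fun i => hφ.gstar_fiber_ne_universal (by omega) hfib i _
    refine ⟨fun u v huv => hφ.gstar_fiber_ne_of_adj (by omega) hfib huv _ _,
      fun i ⟨w, hw⟩ => hdisj i w hw.symm, ?_⟩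
    rw [ncard_range_gstar_eq_add _ hfib hdisj, hstar]
  · obtain ⟨C, hC⟩ :=
      exists_coloring_ncard_range_eq (chromaticNumber_le_iff_colorable.mp hχt) ht
    exact ⟨starColoring n C, isKnWORM_starColoring (by omega) htf C,
      ncard_range_starColoring_inr, fun _ _ _ => rfl, by rw [ncard_range_starColoring_inl, hC]⟩
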